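/- Let F be a complete nonarchimedean field of residual characteristic 0 and let r ∈ (0,1) lie outside the norm group |ℂ_F^×| of the completed algebraic closure of F. Then every nonzero g ∈ F⟨r/x, x/r⟩ factors as g = x^i g₁ g₂ with i ∈ ℤ, g₁ a unit of F⟨x/r⟩, and g₂ a unit of F⟨r/x⟩; consequently F⟨r/x, x/r⟩ is a field, equal to the completion of F(x) under the r-Gauss norm. -/

import Mathlib

/-!
Since `r` lies outside `|ℂ_F^×|`, the terms `|aᵢ| rⁱ` of a nonzero Laurent polynomial are pairwise
distinct, so its Gauss norm is attained at a single monomial `c xʲ`. Approximating `g` by a Laurent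
polynomial and dividing by that monomial leaves `h` with `|h - 1| < 1`. Such an `h` factors by
successive approximation: writing `h - 1 ≈ a + b` with `a` in `F⟨x/r⟩` and `b` in `F⟨r/x⟩`, both
of norm at most `|h - 1|`, the quotient `h / ((1 + a)(1 + b))` is within `|h - 1|²` of `1`, and the
products of the factors `1 + a` and `1 + b` converge to units of the two subrings.
-/

open Filter Topology LaurentPolynomial

theorem IsUltrametricDist.norm_sub_le_max {S : Type*} [SeminormedAddGroup S] [IsUltrametricDist S]
    (x y : S) : ‖x - y‖ ≤ max ‖x‖ ‖y‖ := by
  simpa [sub_eq_add_neg] using norm_add_le_max x (-y)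

theorem IsUltrametricDist.of_denseRange {α E : Type*} [SeminormedAddCommGroup E] {f : α → E}
    (hf : DenseRange f) (h : ∀ a b, ‖f a + f b‖ ≤ max ‖f a‖ ‖f b‖) : IsUltrametricDist E :=
  isUltrametricDist_of_forall_norm_add_le_max_norm <| hf.induction_on₂
    (isClosed_le (by fun_prop) (by fun_prop)) h

section Ultrametric

variable {R : Type*} [NormedRing R] [NormOneClass R] [IsUltrametricDist R]

theorem norm_le_one_of_mul_eq_one {u v : R} (huv : u * v = 1) (hu : ‖u - 1‖ < 1) : ‖v‖ ≤ 1 := by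
  by_contra! hv
  have hle : ‖v‖ ≤ max 1 (‖u - 1‖ * ‖v‖) :=
    calc ‖v‖ = ‖1 - (u - 1) * v‖ := by rw [sub_mul, huv, one_mul, sub_sub_cancel]
      _ ≤ max ‖(1 : R)‖ ‖(u - 1) * v‖ := IsUltrametricDist.norm_sub_le_max _ _
      _ ≤ max 1 (‖u - 1‖ * ‖v‖) := by rw [norm_one]; gcongr; exact norm_mul_le _ _
  rcases le_max_iff.1 hle with h | h
  · linarith
  · nlinarith

theorem norm_sub_one_le_of_mul_eq_one {u v : R} (huv : u * v = 1) (hvu : v * u = 1)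
    (hu : ‖u - 1‖ < 1) : ‖v - 1‖ ≤ ‖u - 1‖ :=
  calc ‖v - 1‖ = ‖v * (1 - u)‖ := by rw [mul_sub, mul_one, hvu]
    _ ≤ ‖v‖ * ‖1 - u‖ := norm_mul_le _ _
    _ ≤ ‖u - 1‖ := by
      rw [norm_sub_rev]
      exact mul_le_of_le_one_left (norm_nonneg _) (norm_le_one_of_mul_eq_one huv hu)

end Ultrametric

theorem Subring.exists_unit_coe_eq_one_add {C : Type*} [NormedRing C] [CompleteSpace C]
    (A : Subring C) (hA : IsClosed (A : Set C)) {a : C} (ha : a ∈ A) (h : ‖a‖ < 1) :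
    ∃ α : Aˣ, ((α : A) : C) = 1 + a := by
  have := hA.completeSpace_coe
  exact ⟨Units.oneSub (-⟨a, ha⟩) (by simpa using h), by simp⟩

section Factorization

variable {C : Type*} [NormedCommRing C] [NormOneClass C] [IsUltrametricDist C] [CompleteSpace C]

theorem Subring.exists_hasProd_units (A : Subring C) (hA : IsClosed (A : Set C)) (u : ℕ → Aˣ)
    (hlt : ∀ n, ‖((u n : A) : C) - 1‖ < 1) (hsum : Summable fun n => ‖((u n : A) : C) - 1‖) :
    ∃ w : Aˣ, HasProd (fun n => ((u n : A) : C)) ((w : A) : C) := by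
  have hmul : ∀ n, ((u n : A) : C) * (((u n)⁻¹ : Aˣ) : A) = 1 := fun n => by
    exact_mod_cast (u n).mul_inv
  have hmul' : ∀ n, (((u n)⁻¹ : Aˣ) : A) * ((u n : A) : C) = 1 := fun n => by
    exact_mod_cast (u n).inv_mul
  have multipliable (f : ℕ → C) (hf : Summable fun n => ‖f n - 1‖) : Multipliable f := by
    simpa using multipliable_one_add_of_summable hf
  have mem (f : ℕ → A) (hf : Multipliable fun n => (f n : C)) : ∏' n, (f n : C) ∈ A :=
    hA.mem_of_tendsto hf.hasProd.tendsto_prod_nat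
      (Eventually.of_forall fun n => prod_mem fun k _ => (f k).2)
  have hu := multipliable _ hsum
  have hv := multipliable (fun n => (((u n)⁻¹ : Aˣ) : A)) <|
    hsum.of_nonneg_of_le (fun _ => norm_nonneg _)
      fun n => norm_sub_one_le_of_mul_eq_one (hmul n) (hmul' n) (hlt n)
  refine ⟨Units.mkOfMulEqOne ⟨_, mem _ hu⟩ ⟨_, mem _ hv⟩ (Subtype.ext ?_), hu.hasProd⟩
  simp only [Subring.coe_mul, Subring.coe_one, ← hu.tprod_mul hv, hmul, tprod_one]

variable {A B : Subring C} {D : Set C}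

theorem exists_eq_units_mul_norm_sub_one_le_sq (hA : IsClosed (A : Set C))
    (hB : IsClosed (B : Set C)) (hD : Dense D)
    (hsplit : ∀ d ∈ D, ∃ a ∈ A, ∃ b ∈ B, d = a + b ∧ ‖a‖ ≤ ‖d‖ ∧ ‖b‖ ≤ ‖d‖)
    {z : C} (hz : ‖z - 1‖ < 1) :
    ∃ (α : Aˣ) (β : Bˣ) (z' : C), z = ((α : A) : C) * ((β : B) : C) * z' ∧
      ‖((α : A) : C) - 1‖ ≤ ‖z - 1‖ ∧ ‖((β : B) : C) - 1‖ ≤ ‖z - 1‖ ∧ ‖z' - 1‖ ≤ ‖z - 1‖ ^ 2 := by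
  rcases eq_or_ne z 1 with rfl | hz1
  · exact ⟨1, 1, 1, by simp⟩
  have hpos : 0 < ‖z - 1‖ := norm_pos_iff.2 (sub_ne_zero.2 hz1)
  obtain ⟨d, hdD, hd⟩ := hD.exists_dist_lt (z - 1) (pow_pos hpos 2)
  rw [dist_eq_norm] at hd
  have hdz : ‖d‖ ≤ ‖z - 1‖ :=
    calc ‖d‖ = ‖(z - 1) - (z - 1 - d)‖ := by rw [sub_sub_cancel]
      _ ≤ max ‖z - 1‖ ‖z - 1 - d‖ := IsUltrametricDist.norm_sub_le_max _ _
      _ ≤ ‖z - 1‖ := max_le le_rfl (hd.le.trans (pow_le_of_le_one hpos.le hz.le two_ne_zero))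
  obtain ⟨a, ha, b, hb, rfl, had, hbd⟩ := hsplit d hdD
  have ha1 : ‖a‖ < 1 := (had.trans hdz).trans_lt hz
  have hb1 : ‖b‖ < 1 := (hbd.trans hdz).trans_lt hz
  obtain ⟨α, hα⟩ := A.exists_unit_coe_eq_one_add hA ha ha1
  obtain ⟨β, hβ⟩ := B.exists_unit_coe_eq_one_add hB hb hb1
  have hαα' : (1 + a) * (((α⁻¹ : Aˣ) : A) : C) = 1 := by rw [← hα]; exact_mod_cast α.mul_inv
  have hββ' : (1 + b) * (((β⁻¹ : Bˣ) : B) : C) = 1 := by rw [← hβ]; exact_mod_cast β.mul_inv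
  set α' : C := (((α⁻¹ : Aˣ) : A) : C)
  set β' : C := (((β⁻¹ : Bˣ) : B) : C)
  refine ⟨α, β, z * α' * β', ?_, ?_, ?_, ?_⟩
  · rw [hα, hβ]; linear_combination (-z * ((1 + b) * β')) * hαα' - z * hββ'
  · rw [hα, add_sub_cancel_left]; exact had.trans hdz
  · rw [hβ, add_sub_cancel_left]; exact hbd.trans hdz
  have hα'β' : ‖α' * β'‖ ≤ 1 := (norm_mul_le _ _).trans <| mul_le_one₀
    (norm_le_one_of_mul_eq_one hαα' (by rwa [add_sub_cancel_left])) (norm_nonneg _)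
    (norm_le_one_of_mul_eq_one hββ' (by rwa [add_sub_cancel_left]))
  have hab : ‖a * b‖ ≤ ‖z - 1‖ ^ 2 := (norm_mul_le _ _).trans <| by
    rw [sq]; exact mul_le_mul (had.trans hdz) (hbd.trans hdz) (norm_nonneg _) hpos.le
  -- `z - (1 + a) (1 + b)` is the approximation error minus `a b`, hence the quadratic decay
  calc ‖z * α' * β' - 1‖ = ‖(z - 1 - (a + b) - a * b) * (α' * β')‖ := by
        congr 1; linear_combination ((1 + b) * β') * hαα' + hββ'
    _ ≤ ‖z - 1 - (a + b) - a * b‖ * ‖α' * β'‖ := norm_mul_le _ _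
    _ ≤ ‖z - 1‖ ^ 2 * 1 := by
        gcongr
        exact (IsUltrametricDist.norm_sub_le_max _ _).trans (max_le hd.le hab)
    _ = ‖z - 1‖ ^ 2 := mul_one _

theorem exists_units_eq_mul_of_norm_sub_one_lt (hA : IsClosed (A : Set C))
    (hB : IsClosed (B : Set C)) (hD : Dense D)
    (hsplit : ∀ d ∈ D, ∃ a ∈ A, ∃ b ∈ B, d = a + b ∧ ‖a‖ ≤ ‖d‖ ∧ ‖b‖ ≤ ‖d‖)
    {z : C} (hz : ‖z - 1‖ < 1) : ∃ (α : Aˣ) (β : Bˣ), z = ((α : A) : C) * ((β : B) : C) := by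
  choose! α β next hnext hα hβ hstep using fun w (hw : ‖w - 1‖ < 1) =>
    exists_eq_units_mul_norm_sub_one_le_sq hA hB hD hsplit hw
  set δ := ‖z - 1‖
  let w (n : ℕ) : C := next^[n] z
  have hw (n : ℕ) : ‖w n - 1‖ ≤ δ ^ (n + 1) := by
    induction n with
    | zero => simp [w, δ]
    | succ n ih =>
      have hlt : ‖w n - 1‖ < 1 := ih.trans_lt (pow_lt_one₀ (norm_nonneg _) hz n.succ_ne_zero)
      calc ‖w (n + 1) - 1‖ ≤ ‖w n - 1‖ ^ 2 := by
            simpa only [w, Function.iterate_succ_apply'] using hstep _ hlt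
        _ ≤ (δ ^ (n + 1)) ^ 2 := by gcongr
        _ ≤ δ ^ (n + 1 + 1) := by
          rw [← pow_mul]; exact pow_le_pow_of_le_one (norm_nonneg _) hz.le (by omega)
  have hwlt (n : ℕ) : ‖w n - 1‖ < 1 :=
    (hw n).trans_lt (pow_lt_one₀ (norm_nonneg _) hz n.succ_ne_zero)
  have hprod (n : ℕ) : z = (∏ k ∈ Finset.range n, ((α (w k) : A) : C)) *
      (∏ k ∈ Finset.range n, ((β (w k) : B) : C)) * w n := by
    induction n with
    | zero => simp [w]
    | succ n ih =>
      rw [Finset.prod_range_succ, Finset.prod_range_succ]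
      simp only [w, Function.iterate_succ_apply'] at ih ⊢
      linear_combination ih + ((∏ k ∈ Finset.range n, ((α (w k) : A) : C)) *
        ∏ k ∈ Finset.range n, ((β (w k) : B) : C)) * hnext _ (hwlt n)
  have hgeom : Summable fun n => δ ^ (n + 1) := by
    simpa [pow_succ] using (summable_geometric_of_lt_one (norm_nonneg _) hz).mul_right δ
  obtain ⟨P, hP⟩ := A.exists_hasProd_units hA (fun n => α (w n))
    (fun n => (hα _ (hwlt n)).trans_lt (hwlt n))
    (hgeom.of_nonneg_of_le (fun _ => norm_nonneg _) fun n => (hα _ (hwlt n)).trans (hw n))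
  obtain ⟨Q, hQ⟩ := B.exists_hasProd_units hB (fun n => β (w n))
    (fun n => (hβ _ (hwlt n)).trans_lt (hwlt n))
    (hgeom.of_nonneg_of_le (fun _ => norm_nonneg _) fun n => (hβ _ (hwlt n)).trans (hw n))
  have hw_one : Tendsto w atTop (𝓝 1) := tendsto_iff_norm_sub_tendsto_zero.2 <|
    squeeze_zero (fun _ => norm_nonneg _) hw <|
      (tendsto_pow_atTop_nhds_zero_of_lt_one (norm_nonneg _) hz).comp (tendsto_add_atTop_nat 1)
  have hlim := ((hP.tendsto_prod_nat.mul hQ.tendsto_prod_nat).mul hw_one).congr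
    fun n => (hprod n).symm
  rw [mul_one] at hlim
  exact ⟨P, Q, tendsto_nhds_unique tendsto_const_nhds hlim⟩

end Factorization

namespace AddMonoidAlgebra

variable (R : Type*) [Ring R] {G : Type*} [AddMonoid G]

noncomputable def supportedSubring (M : AddSubmonoid G) : Subring (AddMonoidAlgebra R G) where
  toAddSubgroup := (supported R R (M : Set G)).toAddSubgroup
  one_mem' _ hi := by
    obtain rfl := Finset.mem_zero.1 (support_coeff_one_subset hi)
    exact M.zero_mem
  mul_mem' {x y} hx hy := by
    classical
    intro i hi
    obtain ⟨a, ha, b, hb, rfl⟩ := Finset.mem_add.1 (support_coeff_mul_subset x y hi)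
    exact M.add_mem (hx ha) (hy hb)

variable {R}

theorem mem_supportedSubring {M : AddSubmonoid G} {x : AddMonoidAlgebra R G} :
    x ∈ supportedSubring R M ↔ ∀ i ∉ M, x.coeff i = 0 :=
  mem_supported'

end AddMonoidAlgebra

namespace LaurentPolynomial

variable {F : Type*} [Field F]

variable (F) in
noncomputable def nonnegSupported : Subring F[T;T⁻¹] :=
  AddMonoidAlgebra.supportedSubring F (AddSubmonoid.nonneg ℤ)

variable (F) in
noncomputable def nonposSupported : Subring F[T;T⁻¹] :=
  AddMonoidAlgebra.supportedSubring F ((AddSubmonoid.nonneg ℤ).comap negAddMonoidHom)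

theorem mem_nonnegSupported {x : F[T;T⁻¹]} : x ∈ nonnegSupported F ↔ ∀ i < 0, x.coeff i = 0 := by
  simp [nonnegSupported, AddMonoidAlgebra.mem_supportedSubring]

theorem mem_nonposSupported {x : F[T;T⁻¹]} :
    x ∈ nonposSupported F ↔ ∀ i, 0 < i → x.coeff i = 0 := by
  simp [nonposSupported, AddMonoidAlgebra.mem_supportedSubring]

theorem C_mem_nonnegSupported (c : F) : C c ∈ nonnegSupported F :=
  mem_nonnegSupported.2 fun i hi => by
    rw [← single_eq_C, AddMonoidAlgebra.coeff_single, Finsupp.single_eq_of_ne hi.ne]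

theorem coeff_C_mul_T (c : F) (j i : ℤ) : (C c * T j).coeff i = if j = i then c else 0 := by
  rw [← single_eq_C_mul_T, AddMonoidAlgebra.coeff_single, Finsupp.single_apply]

theorem C_mul_T_mul_C_inv_mul_T_neg {c : F} (hc : c ≠ 0) (j : ℤ) :
    C c * T j * (C c⁻¹ * T (-j)) = 1 := by
  rw [mul_mul_mul_comm, ← map_mul, mul_inv_cancel₀ hc, ← T_add, add_neg_cancel, T_zero, map_one,
    mul_one]

variable (v : AbsoluteValue F ℝ) (r : ℝ)

noncomputable def gaussNorm (x : F[T;T⁻¹]) : ℝ := ⨆ i : ℤ, v (x.coeff i) * r ^ i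

variable {v r}

theorem bddAbove_range_gaussNorm (x : F[T;T⁻¹]) :
    BddAbove (Set.range fun i => v (x.coeff i) * r ^ i) := by
  refine ((x.coeff.support.finite_toSet.image fun i => v (x.coeff i) * r ^ i).insert 0).bddAbove
    |>.mono ?_
  rintro _ ⟨i, rfl⟩
  by_cases h : x.coeff i = 0
  · simp [h]
  · exact Or.inr ⟨i, Finsupp.mem_support_iff.2 h, rfl⟩

theorem le_gaussNorm (x : F[T;T⁻¹]) (i : ℤ) : v (x.coeff i) * r ^ i ≤ gaussNorm v r x :=
  le_ciSup (bddAbove_range_gaussNorm x) i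

theorem gaussNorm_le {x : F[T;T⁻¹]} {B : ℝ} (h : ∀ i, v (x.coeff i) * r ^ i ≤ B) :
    gaussNorm v r x ≤ B :=
  ciSup_le h

theorem gaussNorm_mono (hr : 0 ≤ r) {x y : F[T;T⁻¹]} (h : ∀ i, v (y.coeff i) ≤ v (x.coeff i)) :
    gaussNorm v r y ≤ gaussNorm v r x :=
  gaussNorm_le fun i =>
    (mul_le_mul_of_nonneg_right (h i) (zpow_nonneg hr i)).trans (le_gaussNorm x i)

theorem gaussNorm_add_le (hv : IsNonarchimedean v) (hr : 0 ≤ r) (x y : F[T;T⁻¹]) :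
    gaussNorm v r (x + y) ≤ max (gaussNorm v r x) (gaussNorm v r y) :=
  gaussNorm_le fun i =>
    calc v ((x + y).coeff i) * r ^ i ≤ max (v (x.coeff i)) (v (y.coeff i)) * r ^ i := by
          gcongr; exact hv _ _
      _ = max (v (x.coeff i) * r ^ i) (v (y.coeff i) * r ^ i) :=
          max_mul_of_nonneg _ _ (zpow_nonneg hr i)
      _ ≤ max (gaussNorm v r x) (gaussNorm v r y) :=
          max_le_max (le_gaussNorm x i) (le_gaussNorm y i)

theorem gaussNorm_C_mul_T (hr : 0 ≤ r) (c : F) (j : ℤ) :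
    gaussNorm v r (C c * T j) = v c * r ^ j := by
  have hj := le_gaussNorm (v := v) (r := r) (C c * T j) j
  rw [coeff_C_mul_T, if_pos rfl] at hj
  refine le_antisymm (gaussNorm_le fun i => ?_) hj
  rw [coeff_C_mul_T]
  split_ifs with h
  · rw [← h]
  · simp only [map_zero, zero_mul]; exact mul_nonneg (v.nonneg c) (zpow_nonneg hr j)

theorem exists_gaussNorm_eq (hr : 0 ≤ r) {x : F[T;T⁻¹]} (hx : x ≠ 0) :
    ∃ j, x.coeff j ≠ 0 ∧ gaussNorm v r x = v (x.coeff j) * r ^ j := by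
  have hne : x.coeff.support.Nonempty := by
    simpa [Finsupp.support_nonempty_iff] using hx
  obtain ⟨j, hj, hmax⟩ := x.coeff.support.exists_max_image (fun i => v (x.coeff i) * r ^ i) hne
  refine ⟨j, Finsupp.mem_support_iff.1 hj,
    le_antisymm (gaussNorm_le fun i => ?_) (le_gaussNorm x j)⟩
  by_cases h : x.coeff i = 0
  · simpa [h] using mul_nonneg (v.nonneg _) (zpow_nonneg hr j)
  · exact hmax i (Finsupp.mem_support_iff.2 h)

theorem mul_zpow_ne_mul_zpow (hr : 0 < r)
    (hirr : ∀ (n : ℕ) (a : F), 0 < n → a ≠ 0 → r ^ n ≠ v a) {a b : F} (ha : a ≠ 0) (hb : b ≠ 0)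
    {i j : ℤ} (hij : i ≠ j) : v a * r ^ i ≠ v b * r ^ j := by
  wlog h : i < j generalizing a b i j
  · exact (this hb ha hij.symm (hij.symm.lt_of_le (not_lt.1 h))).symm
  intro heq
  obtain ⟨n, hn, rfl⟩ : ∃ n : ℕ, 0 < n ∧ j = i + n := ⟨(j - i).toNat, by omega, by omega⟩
  rw [zpow_add₀ hr.ne', zpow_natCast] at heq
  apply hirr n (a / b) hn (div_ne_zero ha hb)
  rw [map_div₀, eq_div_iff (v.ne_zero hb)]
  apply mul_right_cancel₀ (zpow_ne_zero i hr.ne')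
  linear_combination -heq

theorem exists_gaussNorm_sub_C_mul_T_lt (hr : 0 < r)
    (hirr : ∀ (n : ℕ) (a : F), 0 < n → a ≠ 0 → r ^ n ≠ v a) {x : F[T;T⁻¹]} (hx : x ≠ 0) :
    ∃ j, x.coeff j ≠ 0 ∧ gaussNorm v r x = v (x.coeff j) * r ^ j ∧
      gaussNorm v r (x - C (x.coeff j) * T j) < gaussNorm v r x := by
  obtain ⟨j, hj, hxj⟩ := exists_gaussNorm_eq hr.le hx
  refine ⟨j, hj, hxj, ?_⟩
  have hpos : 0 < gaussNorm v r x := hxj ▸ mul_pos (v.pos hj) (zpow_pos hr j)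
  set y := x - C (x.coeff j) * T j
  have hy (i : ℤ) : y.coeff i = if j = i then 0 else x.coeff i := by
    rw [AddMonoidAlgebra.coeff_sub, Finsupp.sub_apply, coeff_C_mul_T]
    split_ifs with h <;> simp [h]
  rcases eq_or_ne y 0 with h0 | h0
  · exact (gaussNorm_le fun i => by simp [h0]).trans_lt hpos
  obtain ⟨k, hk, hyk⟩ := exists_gaussNorm_eq hr.le h0
  have hjk : j ≠ k := fun h => hk (by rw [hy, if_pos h])
  rw [hy, if_neg hjk] at hk hyk
  rw [hyk]
  refine lt_of_le_of_ne (le_gaussNorm x k) ?_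
  rw [hxj]
  exact mul_zpow_ne_mul_zpow hr hirr hk hj hjk.symm

theorem exists_eq_add_gaussNorm_le (hr : 0 ≤ r) (x : F[T;T⁻¹]) :
    ∃ x₁ ∈ nonnegSupported F, ∃ x₂ ∈ nonposSupported F, x = x₁ + x₂ ∧
      gaussNorm v r x₁ ≤ gaussNorm v r x ∧ gaussNorm v r x₂ ≤ gaussNorm v r x := by
  have hfilter (p : ℤ → Prop) [DecidablePred p] (i : ℤ) :
      v (x.coeff.filter p i) ≤ v (x.coeff i) := by
    rw [Finsupp.filter_apply]; split_ifs <;> simp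
  refine ⟨.ofCoeff (x.coeff.filter (0 ≤ ·)), mem_nonnegSupported.2 fun i hi => ?_,
    .ofCoeff (x.coeff.filter (¬ 0 ≤ ·)), mem_nonposSupported.2 fun i hi => ?_, ?_,
    gaussNorm_mono hr (hfilter _), gaussNorm_mono hr (hfilter _)⟩
  · exact Finsupp.filter_apply_neg _ _ (not_le.2 hi)
  · exact Finsupp.filter_apply_neg _ _ (not_not.2 hi.le)
  · rw [← AddMonoidAlgebra.ofCoeff_add, Finsupp.filter_add_filter_not]

end LaurentPolynomial

section GaussNormCompletion

variable {F S : Type*} [Field F] [NormedCommRing S] {v : AbsoluteValue F ℝ} {r : ℝ}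
  {Λ : F[T;T⁻¹] →+* S}

theorem isUltrametricDist_of_gaussNorm (hv : IsNonarchimedean v) (hr : 0 ≤ r)
    (hΛ : ∀ x, ‖Λ x‖ = gaussNorm v r x) (hdense : DenseRange Λ) : IsUltrametricDist S :=
  .of_denseRange hdense fun x y => by
    rw [← map_add, hΛ, hΛ, hΛ]; exact gaussNorm_add_le hv hr x y

theorem normOneClass_of_gaussNorm (hr : 0 ≤ r) (hΛ : ∀ x, ‖Λ x‖ = gaussNorm v r x) :
    NormOneClass S :=
  ⟨by simpa using (hΛ (C 1 * T 0)).trans (gaussNorm_C_mul_T hr 1 0)⟩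

theorem exists_norm_mul_C_mul_T_sub_one_lt [IsUltrametricDist S] (hr : 0 < r)
    (hirr : ∀ (n : ℕ) (a : F), 0 < n → a ≠ 0 → r ^ n ≠ v a)
    (hΛ : ∀ x, ‖Λ x‖ = gaussNorm v r x) (hdense : DenseRange Λ) {g : S} (hg : g ≠ 0) :
    ∃ (j : ℤ) (c : F), c ≠ 0 ∧ ‖g * Λ (C c⁻¹ * T (-j)) - 1‖ < 1 := by
  obtain ⟨x, hx⟩ := hdense.exists_dist_lt g (norm_pos_iff.2 hg)
  rw [dist_eq_norm] at hx
  have hxg : ‖Λ x‖ = ‖g‖ := by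
    have h := IsUltrametricDist.norm_eq_of_add_norm_lt_max (x := g) (y := -Λ x)
      (by rw [← sub_eq_add_neg]; exact hx.trans_le (le_max_left _ _))
    rw [h, norm_neg]
  have hx0 : x ≠ 0 := by
    rintro rfl
    rw [map_zero, norm_zero, eq_comm, norm_eq_zero] at hxg
    exact hg hxg
  obtain ⟨j, hj, hxj, hlt⟩ := exists_gaussNorm_sub_C_mul_T_lt hr hirr hx0
  set c := x.coeff j
  refine ⟨j, c, hj, ?_⟩
  have hw : Λ (C c * T j) * Λ (C c⁻¹ * T (-j)) = 1 := by
    rw [← map_mul, C_mul_T_mul_C_inv_mul_T_neg hj, map_one]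
  have hgw : ‖g - Λ (C c * T j)‖ < ‖g‖ :=
    calc ‖g - Λ (C c * T j)‖ = ‖(g - Λ x) + Λ (x - C c * T j)‖ := by
          rw [map_sub, sub_add_sub_cancel]
      _ ≤ max ‖g - Λ x‖ ‖Λ (x - C c * T j)‖ := IsUltrametricDist.norm_add_le_max _ _
      _ < ‖g‖ := max_lt hx (by rw [← hxg, hΛ, hΛ]; exact hlt)
  have hinv : ‖Λ (C c⁻¹ * T (-j))‖ * ‖g‖ = 1 := by
    rw [hΛ, gaussNorm_C_mul_T hr.le, ← hxg, hΛ, hxj, map_inv₀, zpow_neg]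
    field_simp [v.ne_zero hj, zpow_ne_zero j hr.ne']
  calc ‖g * Λ (C c⁻¹ * T (-j)) - 1‖ = ‖(g - Λ (C c * T j)) * Λ (C c⁻¹ * T (-j))‖ := by
        rw [sub_mul, hw]
    _ ≤ ‖g - Λ (C c * T j)‖ * ‖Λ (C c⁻¹ * T (-j))‖ := norm_mul_le _ _
    _ < ‖g‖ * ‖Λ (C c⁻¹ * T (-j))‖ :=
        mul_lt_mul_of_pos_right hgw (pos_of_mul_pos_left (hinv ▸ one_pos) (norm_nonneg g))
    _ = 1 := by rw [mul_comm, hinv]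

theorem exists_eq_add_norm_le (hr : 0 ≤ r) (hΛ : ∀ x, ‖Λ x‖ = gaussNorm v r x) :
    ∀ d ∈ Set.range Λ, ∃ a ∈ ((nonnegSupported F).map Λ).topologicalClosure,
      ∃ b ∈ ((nonposSupported F).map Λ).topologicalClosure, d = a + b ∧ ‖a‖ ≤ ‖d‖ ∧ ‖b‖ ≤ ‖d‖ := by
  rintro _ ⟨x, rfl⟩
  obtain ⟨x₁, h₁, x₂, h₂, rfl, hx₁, hx₂⟩ := exists_eq_add_gaussNorm_le (v := v) hr x
  refine ⟨Λ x₁, Subring.le_topologicalClosure _ ⟨x₁, h₁, rfl⟩,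
    Λ x₂, Subring.le_topologicalClosure _ ⟨x₂, h₂, rfl⟩, map_add _ _ _, ?_, ?_⟩
  · rw [hΛ, hΛ]; exact hx₁
  · rw [hΛ, hΛ]; exact hx₂

variable [CompleteSpace S]

-- The two topological closures are `F⟨x/r⟩` and `F⟨r/x⟩`.
theorem exists_eq_T_mul_units (hv : IsNonarchimedean v) (hr : 0 < r)
    (hirr : ∀ (n : ℕ) (a : F), 0 < n → a ≠ 0 → r ^ n ≠ v a)
    (hΛ : ∀ x, ‖Λ x‖ = gaussNorm v r x) (hdense : DenseRange Λ) {g : S} (hg : g ≠ 0) :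
    ∃ (j : ℤ) (α : (((nonnegSupported F).map Λ).topologicalClosure)ˣ)
      (β : (((nonposSupported F).map Λ).topologicalClosure)ˣ), g = Λ (T j) * α * β := by
  have := isUltrametricDist_of_gaussNorm hv hr.le hΛ hdense
  have := normOneClass_of_gaussNorm hr.le hΛ
  obtain ⟨j, c, hc, hlt⟩ := exists_norm_mul_C_mul_T_sub_one_lt hr hirr hΛ hdense hg
  obtain ⟨α, β, hαβ⟩ := exists_units_eq_mul_of_norm_sub_one_lt
    (Subring.isClosed_topologicalClosure _) (Subring.isClosed_topologicalClosure _)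
    hdense (exists_eq_add_norm_le hr.le hΛ) hlt
  let κ := Units.map ((Λ.comp C).codRestrict ((nonnegSupported F).map Λ).topologicalClosure
    fun c => Subring.le_topologicalClosure _ ⟨_, C_mem_nonnegSupported c, rfl⟩).toMonoidHom
    (Units.mk0 c hc)
  refine ⟨j, κ * α, β, ?_⟩
  have hκ : (((κ : _) : _) : S) = Λ (C c) := rfl
  have hw := congrArg Λ (C_mul_T_mul_C_inv_mul_T_neg hc j)
  simp only [map_mul, map_one] at hw hαβ
  push_cast [hκ]
  linear_combination (Λ (T j) * Λ (C c)) * hαβ - g * hw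

theorem isField_of_gaussNorm (hv : IsNonarchimedean v) (hr : 0 < r)
    (hirr : ∀ (n : ℕ) (a : F), 0 < n → a ≠ 0 → r ^ n ≠ v a)
    (hΛ : ∀ x, ‖Λ x‖ = gaussNorm v r x) (hdense : DenseRange Λ) : IsField S := by
  have := normOneClass_of_gaussNorm hr.le hΛ
  refine ⟨⟨0, 1, fun h => by simpa using congrArg norm h⟩, mul_comm, fun hg => ?_⟩
  obtain ⟨j, α, β, rfl⟩ := exists_eq_T_mul_units hv hr hirr hΛ hdense hg
  have hunit := (((isUnit_T j).map Λ).mul (α.isUnit.map (Subring.subtype _))).mul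
    (β.isUnit.map (Subring.subtype _))
  exact ⟨_, hunit.mul_val_inv⟩

end GaussNormCompletion

section Evaluation

variable {F S : Type*} [Field F] [CommRing S]

theorem LaurentPolynomial.eval₂_ofCoeff (fF : F →+* S) (X : Sˣ) (a : ℤ →₀ F) :
    eval₂ fF X (.ofCoeff a) = a.sum fun i c => fF c * ((X ^ i : Sˣ) : S) := by
  induction a using Finsupp.induction_linear with
  | zero => simp
  | add a b ha hb =>
    rw [AddMonoidAlgebra.ofCoeff_add, map_add, ha, hb, Finsupp.sum_add_index' (by simp)]
    intros; rw [map_add, add_mul]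
  | single i c =>
    rw [Finsupp.sum_single_index (by simp), ← eval₂_C_mul_T, ← single_eq_C_mul_T]
    rfl

theorem LaurentPolynomial.image_sum_eq_coe_map (fF : F →+* S) (X : Sˣ) (P : Subring F[T;T⁻¹]) :
    (fun a : ℤ →₀ F => a.sum fun i c => fF c * ((X ^ i : Sˣ) : S)) '' {a | .ofCoeff a ∈ P} =
      (P.map (eval₂ fF X) : Set S) := by
  ext y
  constructor
  · rintro ⟨a, ha, rfl⟩
    exact ⟨_, ha, eval₂_ofCoeff fF X a⟩
  · rintro ⟨x, hx, rfl⟩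
    exact ⟨x.coeff, hx, (eval₂_ofCoeff fF X x.coeff).symm⟩

end Evaluation

theorem gauss_norm_completion_factorization_general
    (F : Type) [Field F]
    (ν : F → ℝ)
    (hν0 : ∀ x : F, ν x = 0 ↔ x = 0)
    (hνmul : ∀ x y : F, ν (x * y) = ν x * ν y)
    (hνadd : ∀ x y : F, ν (x + y) ≤ max (ν x) (ν y))
    (r : ℝ) (hr0 : 0 < r)
    (hirr : ∀ (n : ℕ) (a : F), 0 < n → a ≠ 0 → r ^ n ≠ ν a)
    (C : Type) [CommRing C] [MetricSpace C] [CompleteSpace C]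
    (νC : C → ℝ)
    (hdist : ∀ y z : C, dist y z = νC (y - z))
    (hνCmul : ∀ y z : C, νC (y * z) ≤ νC y * νC z)
    (fF : F →+* C) (hfF : ∀ a : F, νC (fF a) = ν a)
    (X : Cˣ)
    (hGauss : ∀ a : ℤ →₀ F,
      νC (a.sum fun i c => fF c * ((X ^ i : Cˣ) : C)) = ⨆ i : ℤ, ν (a i) * r ^ i)
    (hdense : DenseRange fun a : ℤ →₀ F =>
      a.sum fun i c => fF c * ((X ^ i : Cˣ) : C)) :
    (∀ g : C, g ≠ 0 → ∃ (i : ℤ) (g₁ g₂ : C),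
      g = ((X ^ i : Cˣ) : C) * g₁ * g₂ ∧
      g₁ ∈ closure ((fun a : ℤ →₀ F => a.sum fun i c => fF c * ((X ^ i : Cˣ) : C)) ''
        {a | ∀ i : ℤ, i < 0 → a i = 0}) ∧
      (∃ h₁ ∈ closure ((fun a : ℤ →₀ F => a.sum fun i c => fF c * ((X ^ i : Cˣ) : C)) ''
        {a | ∀ i : ℤ, i < 0 → a i = 0}), g₁ * h₁ = 1) ∧
      g₂ ∈ closure ((fun a : ℤ →₀ F => a.sum fun i c => fF c * ((X ^ i : Cˣ) : C)) ''
        {a | ∀ i : ℤ, 0 < i → a i = 0}) ∧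
      (∃ h₂ ∈ closure ((fun a : ℤ →₀ F => a.sum fun i c => fF c * ((X ^ i : Cˣ) : C)) ''
        {a | ∀ i : ℤ, 0 < i → a i = 0}), g₂ * h₂ = 1)) ∧
    IsField C := by
  have hν_nonneg (x : F) : 0 ≤ ν x := by rw [← hfF, ← sub_zero (fF x), ← hdist]; exact dist_nonneg
  let v : AbsoluteValue F ℝ :=
    { toFun := ν, map_mul' := hνmul, nonneg' := hν_nonneg, eq_zero' := hν0,
      add_le' := fun x y => (hνadd x y).trans (max_le_add_of_nonneg (hν_nonneg x) (hν_nonneg y)) }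
  let _ : NormedCommRing C :=
    { ‹CommRing C›, ‹MetricSpace C› with
      norm := νC
      dist_eq := fun y z => by rw [dist_comm, hdist, neg_add_eq_sub]
      norm_mul_le := hνCmul }
  have hv : IsNonarchimedean v := hνadd
  have hΛ (x : F[T;T⁻¹]) : ‖eval₂ fF X x‖ = gaussNorm v r x :=
    (congrArg νC (eval₂_ofCoeff fF X x.coeff)).trans (hGauss x.coeff)
  have hΛdense : DenseRange (eval₂ fF X) :=
    Dense.mono (by rintro _ ⟨a, rfl⟩; exact ⟨_, eval₂_ofCoeff fF X a⟩) hdense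
  rw [show {a : ℤ →₀ F | ∀ i, i < 0 → a i = 0} = {a | .ofCoeff a ∈ nonnegSupported F} from
      Set.ext fun a => mem_nonnegSupported.symm,
    show {a : ℤ →₀ F | ∀ i, 0 < i → a i = 0} = {a | .ofCoeff a ∈ nonposSupported F} from
      Set.ext fun a => mem_nonposSupported.symm,
    image_sum_eq_coe_map, image_sum_eq_coe_map]
  refine ⟨fun g hg => ?_, isField_of_gaussNorm hv hr0 hirr hΛ hΛdense⟩
  obtain ⟨j, α, β, rfl⟩ := exists_eq_T_mul_units hv hr0 hirr hΛ hΛdense hg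
  exact ⟨j, α, β, by rw [eval₂_T], α.val.2, ⟨_, α⁻¹.val.2, by exact_mod_cast α.mul_inv⟩,
    β.val.2, ⟨_, β⁻¹.val.2, by exact_mod_cast β.mul_inv⟩⟩

/-- **Factorization in `F⟨r/x, x/r⟩` for irrational radius `r`.**
Let `F` be a field with a nonarchimedean absolute value `ν` of residual
characteristic `0`, and let `r ∈ (0,1)` lie outside the norm group `|ℂ_F^×|` of the
completed algebraic closure of `F` (equivalently, no positive power of `r` is the
absolute value of a nonzero element of `F`).  Let `C = F⟨r/x, x/r⟩` be the
completion of `F[x, x⁻¹]` under the `r`-Gauss norm `ν_C` (encoded abstractly: a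
complete normed commutative ring in which the Laurent "polynomials"
`Λ a = ∑ᵢ aᵢ Xᵢ` are dense and have norm `sup ᵢ ν(aᵢ) rᵢ`), and inside it let
`F⟨x/r⟩` (resp. `F⟨r/x⟩`) be the closure of the polynomials in `X` (resp. in
`X⁻¹`).  Then every nonzero `g ∈ C` factors as `g = Xⁱ g₁ g₂` with `i ∈ ℤ`, `g₁` a
unit of `F⟨x/r⟩`, and `g₂` a unit of `F⟨r/x⟩`; consequently `C` is a field (the
completion of `F(x)` under the `r`-Gauss norm). -/
theorem gauss_norm_completion_factorization
    (F : Type) [Field F] [CharZero F]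
    (ν : F → ℝ)
    (hν0 : ∀ x : F, ν x = 0 ↔ x = 0)
    (hνmul : ∀ x y : F, ν (x * y) = ν x * ν y)
    (hνadd : ∀ x y : F, ν (x + y) ≤ max (ν x) (ν y))
    (hres : ∀ n : ℕ, n ≠ 0 → ν (n : F) = 1)
    (r : ℝ) (hr0 : 0 < r) (hr1 : r < 1)
    (hirr : ∀ (n : ℕ) (a : F), 0 < n → a ≠ 0 → r ^ n ≠ ν a)
    (C : Type) [CommRing C] [MetricSpace C] [CompleteSpace C]
    (νC : C → ℝ)
    (hdist : ∀ y z : C, dist y z = νC (y - z))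
    (hνCmul : ∀ y z : C, νC (y * z) ≤ νC y * νC z)
    (fF : F →+* C) (hfF : ∀ a : F, νC (fF a) = ν a)
    (X : Cˣ)
    (hGauss : ∀ a : ℤ →₀ F,
      νC (a.sum fun i c => fF c * ((X ^ i : Cˣ) : C)) = ⨆ i : ℤ, ν (a i) * r ^ i)
    (hdense : DenseRange fun a : ℤ →₀ F =>
      a.sum fun i c => fF c * ((X ^ i : Cˣ) : C)) :
    (∀ g : C, g ≠ 0 → ∃ (i : ℤ) (g₁ g₂ : C),
      g = ((X ^ i : Cˣ) : C) * g₁ * g₂ ∧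
      g₁ ∈ closure ((fun a : ℤ →₀ F => a.sum fun i c => fF c * ((X ^ i : Cˣ) : C)) ''
        {a | ∀ i : ℤ, i < 0 → a i = 0}) ∧
      (∃ h₁ ∈ closure ((fun a : ℤ →₀ F => a.sum fun i c => fF c * ((X ^ i : Cˣ) : C)) ''
        {a | ∀ i : ℤ, i < 0 → a i = 0}), g₁ * h₁ = 1) ∧
      g₂ ∈ closure ((fun a : ℤ →₀ F => a.sum fun i c => fF c * ((X ^ i : Cˣ) : C)) ''
        {a | ∀ i : ℤ, 0 < i → a i = 0}) ∧
      (∃ h₂ ∈ closure ((fun a : ℤ →₀ F => a.sum fun i c => fF c * ((X ^ i : Cˣ) : C)) ''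
        {a | ∀ i : ℤ, 0 < i → a i = 0}), g₂ * h₂ = 1)) ∧
    IsField C :=
  gauss_norm_completion_factorization_general F ν hν0 hνmul hνadd r hr0 hirr C νC hdist hνCmul fF
    hfF X hGauss hdense
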